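/- arXiv:1605.07700 — 3 statements merged into one kernel-verified Lean document; each statement's English description precedes it below -/
import Mathlib

section
/- Let T be a square real matrix indexed by a finite type with ‖T‖ ≤ 1 in the induced ∞-operator norm, let γ be a real number with 0 ≤ γ < 1, and let v, w be vectors satisfying v = (T w − w) + γ (T v). Then ‖v + w‖_∞ ≤ ‖w‖_∞, where ‖·‖_∞ on vectors denotes the sup norm. -/
/-!
Adding `w` to the Bellman equation gives `v + w = T (w + γ v) = T ((1 - γ) w + γ (v + w))`.
Since `T` does not expand the sup norm, `‖v + w‖ ≤ (1 - γ) ‖w‖ + γ ‖v + w‖`, and `γ < 1` lets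
us absorb the last term.
-/

open Matrix

attribute [local instance] Matrix.linftyOpNormedAddCommGroup Matrix.linftyOpNormedRing

theorem Matrix.linfty_opNorm_mulVec_le_of_norm_le_one {l m α : Type*} [Fintype l] [Fintype m]
    [NonUnitalNormedRing α] {A : Matrix l m α} (hA : ‖A‖ ≤ 1) (x : m → α) :
    ‖A *ᵥ x‖ ≤ ‖x‖ :=
  calc ‖A *ᵥ x‖ ≤ ‖A‖ * ‖x‖ := linfty_opNorm_mulVec A x
    _ ≤ ‖x‖ := mul_le_of_le_one_left (norm_nonneg x) hA

theorem Matrix.add_eq_mulVec_of_bellman {n R : Type*} [Fintype n] [CommRing R]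
    {T : Matrix n n R} {γ : R} {v w : n → R} (h : v = (T *ᵥ w - w) + γ • (T *ᵥ v)) :
    v + w = T *ᵥ ((1 - γ) • w + γ • (v + w)) := by
  have h_combo : (1 - γ) • w + γ • (v + w) = w + γ • v := by
    rw [sub_smul, one_smul, smul_add]; abel
  rw [h_combo, mulVec_add, mulVec_smul]
  nth_rewrite 1 [h]
  abel

theorem norm_le_of_norm_le_norm_smul_add_smul {E : Type*} [SeminormedAddCommGroup E]
    [NormedSpace ℝ E] {γ : ℝ} (hγ0 : 0 ≤ γ) (hγ1 : γ < 1) {x a : E}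
    (h : ‖x‖ ≤ ‖(1 - γ) • a + γ • x‖) : ‖x‖ ≤ ‖a‖ := by
  have h_convex : ‖x‖ ≤ (1 - γ) * ‖a‖ + γ * ‖x‖ :=
    calc ‖x‖ ≤ ‖(1 - γ) • a + γ • x‖ := h
      _ ≤ ‖(1 - γ) • a‖ + ‖γ • x‖ := norm_add_le _ _
      _ = (1 - γ) * ‖a‖ + γ * ‖x‖ := by
        rw [norm_smul_of_nonneg (sub_nonneg.2 hγ1.le), norm_smul_of_nonneg hγ0]
  have h_scaled : (1 - γ) * ‖x‖ ≤ (1 - γ) * ‖a‖ := by linarith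
  exact le_of_mul_le_mul_left h_scaled (sub_pos.2 hγ1)

theorem stmt_5_general {n : Type*} [Fintype n] (T : Matrix n n ℝ)
    (hT : ‖T‖ ≤ 1) (γ : ℝ) (hγ0 : 0 ≤ γ) (hγ1 : γ < 1) (v w : n → ℝ)
    (hbellman : v = (T *ᵥ w - w) + γ • (T *ᵥ v)) :
    ‖v + w‖ ≤ ‖w‖ := by
  refine norm_le_of_norm_le_norm_smul_add_smul hγ0 hγ1 ?_
  calc ‖v + w‖ = ‖T *ᵥ ((1 - γ) • w + γ • (v + w))‖ := by
        rw [← add_eq_mulVec_of_bellman hbellman]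
    _ ≤ ‖(1 - γ) • w + γ • (v + w)‖ := linfty_opNorm_mulVec_le_of_norm_le_one hT _

/-- If `‖T‖ ≤ 1` (induced ∞-operator norm), `0 ≤ γ < 1`, and `v = (T w - w) + γ (T v)`,
then `‖v + w‖_∞ ≤ ‖w‖_∞` (sup norm on vectors). -/
theorem stmt_5 {n : Type*} [Fintype n] [DecidableEq n] (T : Matrix n n ℝ)
    (hT : ‖T‖ ≤ 1) (γ : ℝ) (hγ0 : 0 ≤ γ) (hγ1 : γ < 1) (v w : n → ℝ)
    (hbellman : v = (T *ᵥ w - w) + γ • (T *ᵥ v)) :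
    ‖v + w‖ ≤ ‖w‖ :=
  stmt_5_general T hT γ hγ0 hγ1 v w hbellman
end

section
/- Let T be a row-stochastic square real matrix indexed by a nonempty finite type (all entries nonnegative and every row sums to 1), let γ be a real number with 0 ≤ γ < 1, let w be a vector with all entries nonnegative, and let v be a vector satisfying v = (T w − w) + γ (T v). If s* is an index at which w attains its maximum value (w_{s*} = max_s w_s), then v_{s*} ≤ 0. -/
/-!
Put `u = v + w`. The Bellman equation says `u = (1 - γ) • T w + γ • T u`, and `T w ≤ w s*` since
`T` averages. At a maximum `i` of `u` this gives `u i ≤ (1 - γ) w s* + γ u i`, so `u ≤ w s*`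
everywhere, and `v s* = u s* - w s* ≤ 0`.
-/

open Matrix

namespace Matrix

variable {n R : Type*} [Fintype n]

theorem mulVec_apply_le_of_forall_le [CommSemiring R] [PartialOrder R] [IsOrderedRing R]
    {T : Matrix n n R} (hpos : ∀ i j, 0 ≤ T i j) (hsum : ∀ i, ∑ j, T i j = 1)
    {x : n → R} {c : R} (hx : ∀ j, x j ≤ c) (i : n) : (T *ᵥ x) i ≤ c :=
  calc (T *ᵥ x) i = ∑ j, T i j * x j := rfl
    _ ≤ ∑ j, T i j * c := Finset.sum_le_sum fun j _ => mul_le_mul_of_nonneg_left (hx j) (hpos i j)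
    _ = c := by rw [← Finset.sum_mul, hsum i, one_mul]

theorem le_of_eq_add_smul_mulVec [Field R] [LinearOrder R] [IsStrictOrderedRing R]
    {T : Matrix n n R} (hpos : ∀ i j, 0 ≤ T i j) (hsum : ∀ i, ∑ j, T i j = 1)
    {γ : R} (hγ0 : 0 ≤ γ) (hγ1 : γ < 1) {a u : n → R} (hu : u = a + γ • (T *ᵥ u))
    {c : R} (ha : ∀ i, a i ≤ (1 - γ) * c) (i : n) : u i ≤ c := by
  have : Nonempty n := ⟨i⟩
  obtain ⟨m, hm⟩ := Finite.exists_max u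
  have hTu : (T *ᵥ u) m ≤ u m := mulVec_apply_le_of_forall_le hpos hsum hm m
  have hum : u m = a m + γ * (T *ᵥ u) m := by simpa using congrFun hu m
  have : (1 - γ) * u m ≤ (1 - γ) * c := by nlinarith [ha m]
  exact (hm i).trans (le_of_mul_le_mul_left this (sub_pos.2 hγ1))

end Matrix

theorem stmt_8_general {n : Type*} [Fintype n] (T : Matrix n n ℝ)
    (hpos : ∀ i j, 0 ≤ T i j) (hsum : ∀ i, ∑ j, T i j = 1)
    (γ : ℝ) (hγ0 : 0 ≤ γ) (hγ1 : γ < 1) (w : n → ℝ)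
    (v : n → ℝ) (hbellman : v = (T *ᵥ w - w) + γ • (T *ᵥ v))
    (s : n) (hs : ∀ i, w i ≤ w s) :
    v s ≤ 0 := by
  have hu : v + w = (1 - γ) • (T *ᵥ w) + γ • (T *ᵥ (v + w)) := by
    rw [mulVec_add]
    nth_rw 1 [hbellman]
    module
  have hTw : ∀ i, ((1 - γ) • (T *ᵥ w)) i ≤ (1 - γ) * w s := fun i =>
    mul_le_mul_of_nonneg_left (mulVec_apply_le_of_forall_le hpos hsum hs i) (by linarith)
  have := le_of_eq_add_smul_mulVec hpos hsum hγ0 hγ1 hu hTw s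
  simp only [Pi.add_apply] at this
  linarith

/-- Let `T` be row-stochastic, `0 ≤ γ < 1`, `w ≥ 0` entrywise, and let `v` satisfy the
Bellman equation `v = (T w - w) + γ (T v)`. If `w` attains its maximum at `s*`, then
`v s* ≤ 0`. -/
theorem stmt_8 {n : Type*} [Fintype n] [Nonempty n] (T : Matrix n n ℝ)
    (hpos : ∀ i j, 0 ≤ T i j) (hsum : ∀ i, ∑ j, T i j = 1)
    (γ : ℝ) (hγ0 : 0 ≤ γ) (hγ1 : γ < 1) (w : n → ℝ) (hw : ∀ i, 0 ≤ w i)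
    (v : n → ℝ) (hbellman : v = (T *ᵥ w - w) + γ • (T *ᵥ v))
    (s : n) (hs : ∀ i, w i ≤ w s) :
    v s ≤ 0 :=
  stmt_8_general T hpos hsum γ hγ0 hγ1 w v hbellman s hs
end

section
/- Let T be a row-stochastic square real matrix indexed by a nonempty finite type (all entries nonnegative and every row sums to 1), let γ be a real number with 0 ≤ γ < 1, let w be any vector, and let v be a vector satisfying v = (T w − w) + γ (T v). Then there exists an index s such that v_s ≤ 0; i.e., the set { s : v_s ≤ 0 } is nonempty. (Option's Termination: since an option discovered by Algorithm 1 terminates exactly at the states where the optimal value is not positive, its termination set is nonempty.) -/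
open Matrix

/-! At a state `s` maximising `x := w + γ v`, stochasticity gives `(T x) s ≤ x s`. The Bellman
equation says `T x = v + w`, so `v s + w s ≤ w s + γ v s`, i.e. `(1 - γ) v s ≤ 0`. -/

section Stochastic

variable {n R : Type*} [Fintype n]

theorem mulVec_apply_le_of_forall_le [Semiring R] [PartialOrder R] [IsOrderedRing R]
    {T : Matrix n n R} {s : n} (hpos : ∀ j, 0 ≤ T s j) (hsum : ∑ j, T s j = 1) {x : n → R}
    (hmax : ∀ j, x j ≤ x s) : (T *ᵥ x) s ≤ x s :=
  calc (T *ᵥ x) s = ∑ j, T s j * x j := rfl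
    _ ≤ ∑ j, T s j * x s := Finset.sum_le_sum fun j _ => mul_le_mul_of_nonneg_left (hmax j) (hpos j)
    _ = x s := by rw [← Finset.sum_mul, hsum, one_mul]

theorem exists_mulVec_apply_le_self [Nonempty n] [Semiring R] [LinearOrder R] [IsOrderedRing R]
    {T : Matrix n n R} (hpos : ∀ i j, 0 ≤ T i j) (hsum : ∀ i, ∑ j, T i j = 1) (x : n → R) :
    ∃ s, (T *ᵥ x) s ≤ x s :=
  let ⟨s, hs⟩ := Finite.exists_max x
  ⟨s, mulVec_apply_le_of_forall_le (hpos s) (hsum s) hs⟩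

end Stochastic

theorem stmt_9_general {n : Type*} [Fintype n] [Nonempty n] (T : Matrix n n ℝ)
    (hpos : ∀ i j, 0 ≤ T i j) (hsum : ∀ i, ∑ j, T i j = 1)
    (γ : ℝ) (hγ1 : γ < 1) (w : n → ℝ)
    (v : n → ℝ) (hbellman : v = (T *ᵥ w - w) + γ • (T *ᵥ v)) :
    ∃ s : n, v s ≤ 0 := by
  obtain ⟨s, hs⟩ := exists_mulVec_apply_le_self hpos hsum (w + γ • v)
  have hv := congrFun hbellman s
  simp only [mulVec_add, mulVec_smul, Pi.add_apply, Pi.sub_apply, Pi.smul_apply,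
    smul_eq_mul] at hs hv
  have hdiscount : (1 - γ) * v s ≤ 0 := by linarith
  exact ⟨s, nonpos_of_mul_nonpos_right hdiscount (by linarith)⟩

/-- **Option's Termination.** Let `T` be row-stochastic, `0 ≤ γ < 1`, `w` any vector, and let
`v` satisfy the Bellman equation `v = (T w - w) + γ (T v)`. Then some state has non-positive
value: the set `{s | v s ≤ 0}` is nonempty. -/
theorem stmt_9 {n : Type*} [Fintype n] [Nonempty n] (T : Matrix n n ℝ)
    (hpos : ∀ i j, 0 ≤ T i j) (hsum : ∀ i, ∑ j, T i j = 1)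
    (γ : ℝ) (hγ0 : 0 ≤ γ) (hγ1 : γ < 1) (w : n → ℝ)
    (v : n → ℝ) (hbellman : v = (T *ᵥ w - w) + γ • (T *ᵥ v)) :
    ∃ s : n, v s ≤ 0 :=
  stmt_9_general T hpos hsum γ hγ1 w v hbellman
end
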